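/- arXiv:2001.07389 — 6 statements merged into one kernel-verified Lean document; each statement's English description precedes it below -/
import Mathlib

section
/- Let Ω = 𝔻 \ {z : |z - 1/2| ≤ 1/2} be the crescent-shaped region, where 𝔻 is the open unit disk. Then the function γ_1(z) = 1/(1 - z) is square-integrable over Ω with respect to planar Lebesgue measure, i.e. ∫_Ω |1/(1-z)|^2 dm(z) < ∞. -/
/-!
Put `w = 1 - z`: the integrand becomes `|w|⁻²` and the crescent becomes the region between two
circles through `0` tangent to the imaginary axis, which in polar coordinates `w = r e^{iθ}` is
`cos θ < r < 2 cos θ`. With the Jacobian `r`, the integrand is `1/r ≤ 1/cos θ` on an `r`-interval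
of length `cos θ`, so each angular slice contributes at most `1` and the integral is at most `2π`.
-/

open MeasureTheory Set Real

/-- The region between the circles `|w - a/2| = a/2` and `|w - b/2| = b/2`, tangent at `0`. -/
def tangentCrescent (a b : ℝ) : Set ℂ := {w | a * w.re < ‖w‖ ^ 2 ∧ ‖w‖ ^ 2 < b * w.re}

lemma isOpen_tangentCrescent (a b : ℝ) : IsOpen (tangentCrescent a b) := by
  rw [tangentCrescent, ofPred_and]
  exact (isOpen_lt (by fun_prop) (by fun_prop)).inter (isOpen_lt (by fun_prop) (by fun_prop))

lemma polarCoord_symm_mem_tangentCrescent_iff {a b r θ : ℝ} (hr : 0 < r) :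
    Complex.polarCoord.symm (r, θ) ∈ tangentCrescent a b ↔ a * cos θ < r ∧ r < b * cos θ := by
  have hre : (Complex.polarCoord.symm (r, θ)).re = r * cos θ := by
    simp [Complex.cos_ofReal_re]
  rw [tangentCrescent, mem_ofPred_eq, Complex.norm_polarCoord_symm, abs_of_pos hr, hre]
  constructor
  · rintro ⟨h₁, h₂⟩; constructor <;> nlinarith
  · rintro ⟨h₁, h₂⟩; constructor <;> nlinarith

lemma lintegral_inv_norm_sq_tangentCrescent_le {a b : ℝ} (ha : 0 < a) (hb : 0 < b) :
    ∫⁻ w in tangentCrescent a b, ENNReal.ofReal (‖w‖ ^ 2)⁻¹ ≤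
      ENNReal.ofReal ((b - a) / a) * ENNReal.ofReal (2 * π) := by
  set G : ℝ × ℝ → ENNReal := fun p =>
    (Ioo (a * cos p.2) (b * cos p.2)).indicator (fun _ => ENNReal.ofReal (a * cos p.2)⁻¹) p.1
  have hpolar : ∀ p ∈ polarCoord.target, ENNReal.ofReal p.1 •
      (tangentCrescent a b).indicator (fun w => ENNReal.ofReal (‖w‖ ^ 2)⁻¹)
        (Complex.polarCoord.symm p) ≤ G p := by
    rintro ⟨r, θ⟩ ⟨hr, -⟩
    replace hr : 0 < r := hr
    by_cases hmem : Complex.polarCoord.symm (r, θ) ∈ tangentCrescent a b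
    · have hr' := (polarCoord_symm_mem_tangentCrescent_iff hr).1 hmem
      have hcos : 0 < cos θ := by nlinarith
      simp only [G, indicator_of_mem hmem, indicator_of_mem (show r ∈ Ioo _ _ from hr'),
        Complex.norm_polarCoord_symm, abs_of_pos hr, smul_eq_mul, ← ENNReal.ofReal_mul hr.le]
      refine ENNReal.ofReal_le_ofReal ?_
      calc r * (r ^ 2)⁻¹ = r⁻¹ := by field_simp
        _ ≤ (a * cos θ)⁻¹ := inv_anti₀ (by positivity) hr'.1.le
    · rw [indicator_of_notMem hmem, smul_zero]
      exact zero_le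
  have hslice : ∀ θ, ∫⁻ r, G (r, θ) ≤ ENNReal.ofReal ((b - a) / a) := by
    intro θ
    simp only [G]
    rw [lintegral_indicator_const measurableSet_Ioo, volume_Ioo]
    rcases le_or_gt (cos θ) 0 with hcos | hcos
    · have : (a * cos θ)⁻¹ ≤ 0 := inv_nonpos.2 (mul_nonpos_of_nonneg_of_nonpos ha.le hcos)
      rw [ENNReal.ofReal_of_nonpos this, zero_mul]
      exact zero_le
    · rw [← ENNReal.ofReal_mul (by positivity)]
      refine ENNReal.ofReal_le_ofReal (le_of_eq ?_)
      field_simp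
  calc ∫⁻ w in tangentCrescent a b, ENNReal.ofReal (‖w‖ ^ 2)⁻¹
      = ∫⁻ p in polarCoord.target, ENNReal.ofReal p.1 •
          (tangentCrescent a b).indicator (fun w => ENNReal.ofReal (‖w‖ ^ 2)⁻¹)
            (Complex.polarCoord.symm p) := by
        rw [← lintegral_indicator (isOpen_tangentCrescent a b).measurableSet,
          ← Complex.lintegral_comp_polarCoord_symm]
    _ ≤ ∫⁻ p in polarCoord.target, G p :=
        setLIntegral_mono' polarCoord.open_target.measurableSet hpolar
    _ = ∫⁻ p, G p.swap ∂(volume.restrict (Ioo (-π) π)).prod (volume.restrict (Ioi 0)) := by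
        rw [lintegral_prod_swap, Measure.prod_restrict, Measure.volume_eq_prod]; rfl
    _ ≤ ∫⁻ θ in Ioo (-π) π, ∫⁻ r in Ioi 0, G (r, θ) := lintegral_prod_le _
    _ ≤ ∫⁻ θ in Ioo (-π) π, ENNReal.ofReal ((b - a) / a) :=
        lintegral_mono fun θ => (setLIntegral_le_lintegral _ _).trans (hslice θ)
    _ = ENNReal.ofReal ((b - a) / a) * ENNReal.ofReal (2 * π) := by
        rw [setLIntegral_const, volume_Ioo]; ring_nf

lemma integrableOn_inv_norm_sq_tangentCrescent {a b : ℝ} (ha : 0 < a) (hb : 0 < b) :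
    IntegrableOn (fun w : ℂ => ‖w⁻¹‖ ^ 2) (tangentCrescent a b) := by
  refine ⟨(measurable_inv.norm.pow_const 2).aestronglyMeasurable, ?_⟩
  rw [hasFiniteIntegral_iff_ofReal (ae_of_all _ fun w => by positivity)]
  simp only [norm_inv, inv_pow]
  exact (lintegral_inv_norm_sq_tangentCrescent_le ha hb).trans_lt
    (ENNReal.mul_lt_top ENNReal.ofReal_lt_top ENNReal.ofReal_lt_top)

lemma setOf_norm_lt_one_and_lt_norm_sub_half :
    {z : ℂ | ‖z‖ < 1 ∧ 1/2 < ‖z - 1/2‖} = (fun z => 1 - z) ⁻¹' tangentCrescent 1 2 := by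
  have hsq : ∀ w : ℂ, ‖w‖ ^ 2 = w.re ^ 2 + w.im ^ 2 := fun w => by
    rw [Complex.sq_norm, Complex.normSq_apply]; ring
  ext z
  simp only [mem_ofPred_eq, mem_preimage, tangentCrescent]
  rw [← sq_lt_sq₀ (norm_nonneg z) zero_le_one, ← sq_lt_sq₀ (by norm_num) (norm_nonneg _),
    hsq, hsq, hsq]
  simp only [Complex.sub_re, Complex.sub_im, Complex.one_re, Complex.one_im, Complex.div_ofNat_re,
    Complex.div_ofNat_im]
  constructor <;> rintro ⟨h₁, h₂⟩ <;> constructor <;> nlinarith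

theorem stmt4 :
    IntegrableOn (fun z : ℂ => ‖(1 - z)⁻¹‖ ^ 2)
      {z : ℂ | ‖z‖ < 1 ∧ 1/2 < ‖z - 1/2‖} volume := by
  rw [setOf_norm_lt_one_and_lt_norm_sub_half]
  exact ((Measure.measurePreserving_sub_left volume 1).integrableOn_comp_preimage
    (MeasurableEquiv.subLeft 1).measurableEmbedding).2
      (integrableOn_inv_norm_sq_tangentCrescent one_pos two_pos)
end

section
/- There exist constants C > 0 such that for all k ∈ ℕ sufficiently large and all r ∈ (0,1), ∫_{e^{1/r}}^∞ e^{-u} u^{-1} (log u)^{2k} du ≤ C · 5^k · (log k)^{2k}. In particular the integral is O(k^2 (log(k^2))^{2k}) as k → ∞. -/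
/-!
For `u ≥ 1` and any `v ≥ 1`, concavity of the logarithm gives `log u ≤ log v + u / v`, so
`(log u) ^ n ≤ 2 ^ (n - 1) * ((log v) ^ n + (u / v) ^ n)`. Against the weight `e^{-u} u⁻¹` the
first term integrates to at most `(log v) ^ n` and the second, by the Gamma integral, to
`(n - 1)! / v ^ n ≤ (n / v) ^ n`. Taking `v = n / L` balances the two terms at `L ^ n`; for
`n = 2k` the choice `L = log k` is admissible as soon as `log k ≥ 2`, i.e. `k ≥ 8`, and the
integral is at most `(2 log k) ^ (2k) = 4 ^ k (log k) ^ (2k)`.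
-/

open MeasureTheory Real Set
open scoped Nat

lemma integrableOn_exp_neg_mul_pow_Ioi (m : ℕ) :
    IntegrableOn (fun x : ℝ => exp (-x) * x ^ m) (Ioi 0) := by
  simpa [Real.rpow_natCast] using Real.GammaIntegral_convergent (s := m + 1) (by positivity)

lemma integral_exp_neg_mul_pow_Ioi (m : ℕ) :
    ∫ x in Ioi (0:ℝ), exp (-x) * x ^ m = m ! := by
  have h := Real.Gamma_eq_integral (s := m + 1) (by positivity)
  rw [Real.Gamma_nat_eq_factorial] at h
  simpa [Real.rpow_natCast] using h.symm

lemma log_le_log_add_div {u v : ℝ} (hu : 0 < u) (hv : 0 < v) : log u ≤ log v + u / v := by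
  have h := Real.log_le_sub_one_of_pos (div_pos hu hv)
  rw [Real.log_div hu.ne' hv.ne'] at h
  linarith

lemma exp_neg_mul_inv_mul_log_pow_le {n : ℕ} (hn : n ≠ 0) {u v : ℝ} (hu : 1 ≤ u) (hv : 1 ≤ v) :
    exp (-u) * u⁻¹ * log u ^ n
      ≤ 2 ^ (n - 1) * (log v ^ n * exp (-u) + (v ^ n)⁻¹ * (exp (-u) * u ^ (n - 1))) := by
  have hu0 : 0 < u := by linarith
  have hlog_pow : log u ^ n ≤ 2 ^ (n - 1) * (log v ^ n + (u / v) ^ n) :=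
    (pow_le_pow_left₀ (log_nonneg hu) (log_le_log_add_div hu0 (by linarith)) n).trans
      (add_pow_le (log_nonneg hv) (by positivity) n)
  have hu_pow : u⁻¹ * (u / v) ^ n = (v ^ n)⁻¹ * u ^ (n - 1) := by
    obtain ⟨m, rfl⟩ := Nat.exists_eq_add_one_of_ne_zero hn
    rw [Nat.add_sub_cancel, div_pow, pow_succ' u m]
    field_simp
  calc exp (-u) * u⁻¹ * log u ^ n
      ≤ exp (-u) * u⁻¹ * (2 ^ (n - 1) * (log v ^ n + (u / v) ^ n)) := by gcongr
    _ = 2 ^ (n - 1) * (u⁻¹ * log v ^ n * exp (-u) + exp (-u) * (u⁻¹ * (u / v) ^ n)) := by ring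
    _ ≤ 2 ^ (n - 1) * (1 * log v ^ n * exp (-u) + exp (-u) * (u⁻¹ * (u / v) ^ n)) := by
      gcongr
      · exact pow_nonneg (log_nonneg hv) n
      · exact inv_le_one_of_one_le₀ hu
    _ = _ := by rw [hu_pow]; ring

lemma setIntegral_exp_neg_mul_inv_mul_log_pow_le {n : ℕ} (hn : n ≠ 0) {a v : ℝ} (ha : 1 ≤ a)
    (hv : 1 ≤ v) :
    ∫ u in Ioi a, exp (-u) * u⁻¹ * log u ^ n ≤ 2 ^ (n - 1) * (log v ^ n + (n - 1)! / v ^ n) := by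
  set g : ℝ → ℝ := fun u =>
    2 ^ (n - 1) * (log v ^ n * exp (-u) + (v ^ n)⁻¹ * (exp (-u) * u ^ (n - 1)))
  have hg_int : IntegrableOn g (Ioi 0) :=
    (((integrableOn_exp_neg_Ioi 0).const_mul _).add
      ((integrableOn_exp_neg_mul_pow_Ioi (n - 1)).const_mul _)).const_mul _
  have hg_nonneg : ∀ u ∈ Ioi (0:ℝ), 0 ≤ g u := fun u hu => by
    have : (0:ℝ) < u := hu
    have := log_nonneg hv
    positivity
  have hg_integral : ∫ u in Ioi 0, g u = 2 ^ (n - 1) * (log v ^ n + (n - 1)! / v ^ n) := by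
    simp only [g]
    rw [integral_const_mul, integral_add ((integrableOn_exp_neg_Ioi 0).const_mul _)
      ((integrableOn_exp_neg_mul_pow_Ioi (n - 1)).const_mul _), integral_const_mul,
      integral_const_mul, integral_exp_neg_Ioi_zero, integral_exp_neg_mul_pow_Ioi]
    ring
  calc ∫ u in Ioi a, exp (-u) * u⁻¹ * log u ^ n
      ≤ ∫ u in Ioi a, g u := by
        refine integral_mono_of_nonneg ?_ (hg_int.mono_set (Ioi_subset_Ioi (by linarith))) ?_
        all_goals filter_upwards [ae_restrict_mem measurableSet_Ioi] with u (hu : a < u)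
        · have : 0 < u := by linarith
          have := log_nonneg (show 1 ≤ u by linarith)
          positivity
        · exact exp_neg_mul_inv_mul_log_pow_le hn (by linarith) hv
    _ ≤ ∫ u in Ioi 0, g u :=
        setIntegral_mono_set hg_int ((ae_restrict_mem measurableSet_Ioi).mono hg_nonneg)
          (Ioi_subset_Ioi (by linarith)).eventuallyLE
    _ = _ := hg_integral

lemma setIntegral_exp_neg_mul_inv_mul_log_pow_le_two_mul_pow {n : ℕ} (hn : n ≠ 0) {a L : ℝ}
    (ha : 1 ≤ a) (hL : 0 < L) (hLn : L ≤ n) (hlog : log (n / L) ≤ L) :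
    ∫ u in Ioi a, exp (-u) * u⁻¹ * log u ^ n ≤ (2 * L) ^ n := by
  have hv : 1 ≤ n / L := (one_le_div hL).mpr hLn
  have hlog_pow : log (n / L) ^ n ≤ L ^ n := pow_le_pow_left₀ (log_nonneg hv) hlog n
  have hfactorial : ((n - 1)! : ℝ) / (n / L) ^ n ≤ L ^ n := by
    rw [div_le_iff₀ (by positivity), ← mul_pow, mul_div_cancel₀ _ hL.ne']
    exact_mod_cast (Nat.factorial_le_pow (n - 1)).trans
      ((Nat.pow_le_pow_left (by omega) _).trans (Nat.pow_le_pow_right (by omega) (by omega)))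
  calc ∫ u in Ioi a, exp (-u) * u⁻¹ * log u ^ n
      ≤ 2 ^ (n - 1) * (log (n / L) ^ n + (n - 1)! / (n / L) ^ n) :=
        setIntegral_exp_neg_mul_inv_mul_log_pow_le hn ha hv
    _ ≤ 2 ^ (n - 1) * (2 * L ^ n) := by gcongr; linarith
    _ = (2 * L) ^ n := by
      rw [mul_pow, ← mul_assoc, ← pow_succ, Nat.sub_add_cancel (Nat.one_le_iff_ne_zero.mpr hn)]

lemma two_le_log_of_eight_le {k : ℕ} (hk : 8 ≤ k) : 2 ≤ log k := by
  rw [le_log_iff_exp_le (by positivity), show (2:ℝ) = 1 + 1 by norm_num, exp_add]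
  have : (8:ℝ) ≤ k := by exact_mod_cast hk
  nlinarith [exp_one_lt_d9, exp_pos 1]

lemma two_pow_two_mul (k : ℕ) : (2:ℝ) ^ (2 * k) = 4 ^ k := by
  rw [pow_mul]
  norm_num

lemma setIntegral_exp_neg_mul_inv_mul_log_pow_two_mul_le {k : ℕ} (hk : 8 ≤ k) {a : ℝ}
    (ha : 1 ≤ a) :
    ∫ u in Ioi a, exp (-u) * u⁻¹ * log u ^ (2 * k) ≤ (2 * log k) ^ (2 * k) := by
  have hk0 : (0:ℝ) < k := by positivity
  have hL := two_le_log_of_eight_le hk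
  have hLk : log k ≤ k := (log_le_sub_one_of_pos hk0).trans (by linarith)
  refine setIntegral_exp_neg_mul_inv_mul_log_pow_le_two_mul_pow (by omega) ha (by linarith)
    (by push_cast; linarith) ?_
  refine log_le_log (by positivity) ?_
  rw [div_le_iff₀ (by linarith)]
  push_cast
  nlinarith

theorem stmt6 :
    (∃ C > (0:ℝ), ∃ K : ℕ, ∀ k : ℕ, K ≤ k → ∀ r ∈ Set.Ioo (0:ℝ) 1,
      (∫ u in Set.Ioi (Real.exp (1/r)), Real.exp (-u) * u⁻¹ * Real.log u ^ (2*k))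
        ≤ C * 5 ^ k * Real.log k ^ (2*k)) ∧
    (∃ C > (0:ℝ), ∃ K : ℕ, ∀ k : ℕ, K ≤ k → ∀ r ∈ Set.Ioo (0:ℝ) 1,
      (∫ u in Set.Ioi (Real.exp (1/r)), Real.exp (-u) * u⁻¹ * Real.log u ^ (2*k))
        ≤ C * (k:ℝ)^2 * Real.log ((k:ℝ)^2) ^ (2*k)) := by
  have hbound : ∀ k : ℕ, 8 ≤ k → ∀ r ∈ Ioo (0:ℝ) 1,
      ∫ u in Ioi (exp (1/r)), exp (-u) * u⁻¹ * log u ^ (2*k) ≤ 4 ^ k * log k ^ (2*k) :=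
    fun k hk r hr => by
      convert setIntegral_exp_neg_mul_inv_mul_log_pow_two_mul_le hk
        (one_le_exp (one_div_nonneg.mpr hr.1.le)) using 1
      rw [mul_pow, two_pow_two_mul]
  refine ⟨⟨1, one_pos, 8, fun k hk r hr => (hbound k hk r hr).trans ?_⟩,
    ⟨1, one_pos, 8, fun k hk r hr => (hbound k hk r hr).trans ?_⟩⟩
  · rw [one_mul]
    gcongr
    norm_num
  · have hk1 : (1:ℝ) ≤ k := by exact_mod_cast (show 1 ≤ k by omega)
    rw [one_mul, log_pow, Nat.cast_ofNat, mul_pow, two_pow_two_mul]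
    exact le_mul_of_one_le_left (by positivity) (one_le_pow₀ hk1)
end

section
/- Let s(t) = exp(-exp(1/|t|)) for t ≠ 0, s(0) = 0, and for r ∈ (0,1) let E_r = {t + is : |t| ≤ r, |s| ≤ s(t)} ⊆ ℂ. Then for every k ∈ ℕ, ∫_{E_r} |t + is|^{-(2k+2)} dt ds ≤ 4 ∫_0^r s(t) t^{-(2k+2)} dt < ∞. -/
/-!
On `E_r` the integrand is at most `|t|^{-(2k+2)}`, which depends on `t` alone, so integrating
first over the vertical fibre `[-s(t), s(t)]` produces the factor `2 s(t)`, and the evenness in `t`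
another factor `2`. The right-hand side is finite because
`s(t) ≤ exp(-1/t) ≤ n! tⁿ` for `t > 0`, so `s(t) / tⁿ` is bounded on `(0, r)`.
-/

open MeasureTheory Set
open scoped ENNReal Nat

noncomputable def flatCusp (t : ℝ) : ℝ :=
  if t = 0 then 0 else Real.exp (-Real.exp (1 / |t|))

lemma flatCusp_nonneg (t : ℝ) : 0 ≤ flatCusp t := by
  unfold flatCusp; split_ifs <;> positivity

lemma flatCusp_neg (t : ℝ) : flatCusp (-t) = flatCusp t := by
  simp [flatCusp]

lemma measurable_flatCusp : Measurable flatCusp :=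
  Measurable.ite (measurableSet_singleton 0) measurable_const (by fun_prop)

lemma Real.exp_neg_inv_le_factorial_mul_pow {t : ℝ} (ht : 0 < t) (n : ℕ) :
    Real.exp (-t⁻¹) ≤ n ! * t ^ n := by
  rw [Real.exp_neg, inv_le_comm₀ (Real.exp_pos _) (by positivity)]
  calc (n ! * t ^ n : ℝ)⁻¹ = t⁻¹ ^ n / n ! := by
        rw [inv_pow, mul_inv, div_eq_mul_inv, mul_comm]
    _ ≤ Real.exp t⁻¹ := Real.pow_div_factorial_le_exp _ (inv_nonneg.2 ht.le) n

lemma flatCusp_le_factorial_mul_pow {t : ℝ} (ht : 0 < t) (n : ℕ) :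
    flatCusp t ≤ n ! * t ^ n := by
  calc flatCusp t = Real.exp (-Real.exp t⁻¹) := by simp [flatCusp, ht.ne', abs_of_pos ht]
    _ ≤ Real.exp (-t⁻¹) := by
        gcongr; linarith [Real.add_one_le_exp t⁻¹]
    _ ≤ n ! * t ^ n := Real.exp_neg_inv_le_factorial_mul_pow ht n

lemma integrableOn_flatCusp_div_pow (n : ℕ) (r : ℝ) :
    IntegrableOn (fun t => flatCusp t / t ^ n) (Ioo 0 r) := by
  refine Integrable.mono' (integrableOn_const (C := (n ! : ℝ)) measure_Ioo_lt_top.ne)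
    ((measurable_flatCusp.div (measurable_id.pow_const n)).aestronglyMeasurable) ?_
  filter_upwards [ae_restrict_mem measurableSet_Ioo] with t ht
  rw [Real.norm_of_nonneg (div_nonneg (flatCusp_nonneg t) (pow_nonneg ht.1.le n)),
    div_le_iff₀ (pow_pos ht.1 n)]
  exact flatCusp_le_factorial_mul_pow ht.1 n

lemma inv_sqrt_pow_le_inv_abs_pow {x y : ℝ} (h : x ≠ 0 ∨ y = 0) (n : ℕ) :
    (√(x ^ 2 + y ^ 2) ^ n)⁻¹ ≤ (|x| ^ n)⁻¹ := by
  rcases h with hx | rfl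
  · have habs_le : |x| ≤ √(x ^ 2 + y ^ 2) := by
      rw [← Real.sqrt_sq_eq_abs]
      exact Real.sqrt_le_sqrt (by nlinarith [sq_nonneg y])
    have := abs_pos.2 hx
    gcongr
  · simp [Real.sqrt_sq_eq_abs]

lemma setLIntegral_comp_fst_of_abs_snd_le {A : Set ℝ} (hA : MeasurableSet A)
    {c : ℝ → ℝ≥0∞} (hc : Measurable c) {g : ℝ → ℝ} (hg : Measurable g) :
    ∫⁻ p in {p : ℝ × ℝ | p.1 ∈ A ∧ |p.2| ≤ g p.1}, c p.1
      = ∫⁻ t in A, c t * ENNReal.ofReal (2 * g t) := by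
  set E := {p : ℝ × ℝ | p.1 ∈ A ∧ |p.2| ≤ g p.1}
  have hE : MeasurableSet E :=
    (measurable_fst hA).inter (measurableSet_le measurable_snd.abs (hg.comp measurable_fst))
  have fiber (t : ℝ) : ∫⁻ y, E.indicator (fun p => c p.1) (t, y)
      = A.indicator (fun t => c t * ENNReal.ofReal (2 * g t)) t := by
    classical
    by_cases ht : t ∈ A
    · have : (fun y => E.indicator (fun p => c p.1) (t, y)) = (Icc (-g t) (g t)).indicator
          fun _ => c t := by
        ext y
        rw [indicator_apply, indicator_apply]
        simp [E, ht, abs_le]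
      rw [this, lintegral_indicator measurableSet_Icc, setLIntegral_const, Real.volume_Icc,
        indicator_of_mem ht, two_mul, sub_neg_eq_add]
    · simp [E, ht]
  rw [← lintegral_indicator hE, Measure.volume_eq_prod,
    lintegral_prod (E.indicator fun p => c p.1)
      ((hc.comp measurable_fst).indicator hE).aemeasurable]
  simp_rw [fiber]
  exact lintegral_indicator hA _

lemma setLIntegral_Icc_le_two_mul_of_even {f : ℝ → ℝ≥0∞} (hf : ∀ t, f (-t) = f t)
    (r : ℝ) :
    ∫⁻ t in Icc (-r) r, f t ≤ 2 * ∫⁻ t in Ioo 0 r, f t := by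
  have reflect : ∫⁻ t in Icc (-r) 0, f t = ∫⁻ t in Icc 0 r, f t := by
    rw [← (Measure.measurePreserving_neg volume).setLIntegral_comp_preimage_emb
      measurableEmbedding_neg]
    simp [hf]
  calc ∫⁻ t in Icc (-r) r, f t ≤ ∫⁻ t in Icc (-r) 0 ∪ Icc 0 r, f t :=
        lintegral_mono_set fun t ht => by
          rcases le_total t 0 with h | h
          exacts [Or.inl ⟨ht.1, h⟩, Or.inr ⟨h, ht.2⟩]
    _ ≤ (∫⁻ t in Icc (-r) 0, f t) + ∫⁻ t in Icc 0 r, f t := lintegral_union_le _ _ _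
    _ = 2 * ∫⁻ t in Ioo 0 r, f t := by
        rw [reflect, Measure.restrict_congr_set Ioo_ae_eq_Icc.symm, two_mul]

lemma setLIntegral_Ioo_ofReal_inv_abs_pow_mul {g : ℝ → ℝ} {n : ℕ} {r : ℝ}
    (hg : ∀ t ∈ Ioo 0 r, 0 ≤ g t) (hint : IntegrableOn (fun t => g t / t ^ n) (Ioo 0 r)) :
    ∫⁻ t in Ioo 0 r, ENNReal.ofReal (|t| ^ n)⁻¹ * ENNReal.ofReal (g t)
      = ENNReal.ofReal (∫ t in Ioo 0 r, g t / t ^ n) := by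
  have on_Ioo : ∀ t ∈ Ioo 0 r,
      ENNReal.ofReal (|t| ^ n)⁻¹ * ENNReal.ofReal (g t) = ENNReal.ofReal (g t / t ^ n) := by
    intro t ht
    rw [← ENNReal.ofReal_mul (by positivity), abs_of_pos ht.1, inv_mul_eq_div]
  rw [setLIntegral_congr_fun measurableSet_Ioo on_Ioo, ofReal_integral_eq_lintegral_ofReal hint]
  filter_upwards [ae_restrict_mem measurableSet_Ioo] with t ht
  exact div_nonneg (hg t ht) (pow_nonneg ht.1.le n)

theorem stmt14_general (s : ℝ → ℝ) (hs : ∀ t : ℝ, t ≠ 0 → s t = Real.exp (-Real.exp (1/|t|)))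
    (hs0 : s 0 = 0) (r : ℝ) (k : ℕ) :
    (∫⁻ p in {p : ℝ × ℝ | |p.1| ≤ r ∧ |p.2| ≤ s p.1},
        ENNReal.ofReal ((Real.sqrt (p.1 ^ 2 + p.2 ^ 2) ^ (2*k+2))⁻¹))
      ≤ ENNReal.ofReal (4 * ∫ t in Set.Ioo (0:ℝ) r, s t / t ^ (2*k+2)) ∧
    IntegrableOn (fun t => s t / t ^ (2*k+2)) (Set.Ioo (0:ℝ) r) volume := by
  obtain rfl : s = flatCusp := funext fun t => by
    by_cases ht : t = 0 <;> simp [flatCusp, ht, hs0, hs t]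
  set n := 2 * k + 2
  have hint := integrableOn_flatCusp_div_pow n r
  refine ⟨?_, hint⟩
  set c : ℝ → ℝ≥0∞ := fun t => ENNReal.ofReal (|t| ^ n)⁻¹
  have hc : Measurable c := by fun_prop
  calc _ ≤ ∫⁻ p in {p : ℝ × ℝ | |p.1| ≤ r ∧ |p.2| ≤ flatCusp p.1}, c p.1 := by
        refine setLIntegral_mono (hc.comp measurable_fst) fun p hp => ?_
        refine ENNReal.ofReal_le_ofReal (inv_sqrt_pow_le_inv_abs_pow ?_ n)
        refine or_iff_not_imp_left.2 fun h => ?_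
        simpa [flatCusp, not_not.1 h] using hp.2
    _ = ∫⁻ t in Icc (-r) r, c t * ENNReal.ofReal (2 * flatCusp t) := by
        rw [← setLIntegral_comp_fst_of_abs_snd_le measurableSet_Icc hc measurable_flatCusp]
        simp only [mem_Icc, abs_le]
    _ ≤ 2 * ∫⁻ t in Ioo 0 r, c t * ENNReal.ofReal (2 * flatCusp t) :=
        setLIntegral_Icc_le_two_mul_of_even (fun t => by simp [c, flatCusp_neg]) r
    _ = 2 * ENNReal.ofReal (∫ t in Ioo 0 r, 2 * flatCusp t / t ^ n) := by
        rw [setLIntegral_Ioo_ofReal_inv_abs_pow_mul (g := fun t => 2 * flatCusp t)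
          (fun t _ => mul_nonneg zero_le_two (flatCusp_nonneg t))
          (by simp only [mul_div_assoc]; exact hint.const_mul 2)]
    _ = ENNReal.ofReal (4 * ∫ t in Ioo 0 r, flatCusp t / t ^ n) := by
        rw [← ENNReal.ofReal_ofNat 2, ← ENNReal.ofReal_mul zero_le_two]
        simp_rw [mul_div_assoc, integral_const_mul, ← mul_assoc]
        norm_num

theorem stmt14 (s : ℝ → ℝ) (hs : ∀ t : ℝ, t ≠ 0 → s t = Real.exp (-Real.exp (1/|t|)))
    (hs0 : s 0 = 0) (r : ℝ) (hr : r ∈ Set.Ioo (0:ℝ) 1) (k : ℕ) :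
    (∫⁻ p in {p : ℝ × ℝ | |p.1| ≤ r ∧ |p.2| ≤ s p.1},
        ENNReal.ofReal ((Real.sqrt (p.1 ^ 2 + p.2 ^ 2) ^ (2*k+2))⁻¹))
      ≤ ENNReal.ofReal (4 * ∫ t in Set.Ioo (0:ℝ) r, s t / t ^ (2*k+2)) ∧
    IntegrableOn (fun t => s t / t ^ (2*k+2)) (Set.Ioo (0:ℝ) r) volume :=
  stmt14_general s hs hs0 r k
end

section
/- Let Ω ⊆ ℂ be open and bounded with 0 ∈ Ω, and suppose the polynomials are dense in the Bergman space A^2(Ω). If Ω ⊆ 𝔻, then the restriction map ρ : A^2(𝔻) → A^2(Ω), ρ(f) = f|_Ω, is continuous, has dense range, and satisfies T_{A^2(Ω)} ∘ ρ = ρ ∘ T_{A^2(𝔻)}, where T denotes the Taylor backward shift; that is, the Taylor backward shift on A^2(Ω) is a quasi-factor of the Taylor backward shift on A^2(𝔻) via ρ. -/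
open MeasureTheory

/-- The Taylor backward shift: `Tf(z) = (f(z) - f(0))/z` for `z ≠ 0`, `Tf(0) = f'(0)`. -/
noncomputable def taylorShift (f : ℂ → ℂ) : ℂ → ℂ :=
  fun z => if z = 0 then deriv f 0 else (f z - f 0) / z

theorem stmt17 (Ω : Set ℂ) (hΩ : IsOpen Ω) (hb : Bornology.IsBounded Ω)
    (h0 : (0:ℂ) ∈ Ω) (hsub : Ω ⊆ Metric.ball (0:ℂ) 1)
    (hdense : ∀ g : ℂ → ℂ, DifferentiableOn ℂ g Ω → MemLp g 2 (volume.restrict Ω) →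
      ∀ ε > (0:ℝ), ∃ P : Polynomial ℂ, (∫ z in Ω, ‖g z - P.eval z‖ ^ 2) < ε) :
    -- the restriction map ρ : A²(𝔻) → A²(Ω), realized as f ↦ Ω.indicator f,
    -- is well defined and norm-bounded (continuous), ...
    (∀ f : ℂ → ℂ, DifferentiableOn ℂ f (Metric.ball (0:ℂ) 1) →
        MemLp f 2 (volume.restrict (Metric.ball (0:ℂ) 1)) →
      DifferentiableOn ℂ (Ω.indicator f) Ω ∧
      MemLp (Ω.indicator f) 2 (volume.restrict Ω) ∧
      (∫ z in Ω, ‖Ω.indicator f z‖ ^ 2) ≤ ∫ z in Metric.ball (0:ℂ) 1, ‖f z‖ ^ 2) ∧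
    -- ... has dense range in A²(Ω), ...
    (∀ g : ℂ → ℂ, DifferentiableOn ℂ g Ω → MemLp g 2 (volume.restrict Ω) →
      ∀ ε > (0:ℝ), ∃ f : ℂ → ℂ, DifferentiableOn ℂ f (Metric.ball (0:ℂ) 1) ∧
        MemLp f 2 (volume.restrict (Metric.ball (0:ℂ) 1)) ∧
        (∫ z in Ω, ‖g z - f z‖ ^ 2) < ε) ∧
    -- ... and intertwines the Taylor shifts: T_{A²(Ω)} ∘ ρ = ρ ∘ T_{A²(𝔻)}.
    (∀ f : ℂ → ℂ, DifferentiableOn ℂ f (Metric.ball (0:ℂ) 1) →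
      Set.EqOn (taylorShift (Ω.indicator f)) (Ω.indicator (taylorShift f)) Ω) := by
  have hΩm : MeasurableSet Ω := hΩ.measurableSet
  refine ⟨?_, ?_, ?_⟩
  · intro f hf hf2
    have heq : Set.EqOn (Ω.indicator f) f Ω := fun z hz => Set.indicator_of_mem hz f
    have hae : Ω.indicator f =ᵐ[volume.restrict Ω] f := by
      filter_upwards [ae_restrict_mem hΩm] with z hz using heq hz
    have hf2Ω : MemLp f 2 (volume.restrict Ω) :=
      hf2.mono_measure (Measure.restrict_mono hsub le_rfl)
    refine ⟨(hf.mono hsub).congr heq, hf2Ω.ae_eq hae.symm, ?_⟩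
    have h1 : (∫ z in Ω, ‖Ω.indicator f z‖ ^ 2) = ∫ z in Ω, ‖f z‖ ^ 2 :=
      integral_congr_ae (by filter_upwards [hae] with z hz using by rw [hz])
    rw [h1]
    have hint : IntegrableOn (fun z => ‖f z‖ ^ 2) (Metric.ball (0:ℂ) 1) := by
      have := hf2.integrable_norm_rpow two_ne_zero ENNReal.ofNat_ne_top
      simpa [ENNReal.toReal_ofNat, Real.rpow_natCast, IntegrableOn] using this
    exact setIntegral_mono_set hint
      (Filter.Eventually.of_forall (fun z => by positivity)) (hsub.eventuallyLE)
  · intro g hg hg2 ε hε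
    obtain ⟨P, hP⟩ := hdense g hg hg2 ε hε
    refine ⟨fun z => P.eval z, (P.differentiable.differentiableOn), ?_, hP⟩
    have hfin : IsFiniteMeasure (volume.restrict (Metric.ball (0:ℂ) 1)) := by
      constructor
      rw [Measure.restrict_apply_univ]
      exact measure_ball_lt_top
    obtain ⟨C, hC⟩ := (isCompact_closedBall (0:ℂ) 1).exists_bound_of_continuousOn
      (P.continuous_aeval.continuousOn)
    refine MemLp.of_bound (P.continuous_aeval.aestronglyMeasurable) C ?_
    filter_upwards [ae_restrict_mem measurableSet_ball] with z hz
    simpa using hC z (Metric.ball_subset_closedBall hz)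
  · intro f hf z hz
    by_cases hz0 : z = 0
    · subst hz0
      have hev : Ω.indicator f =ᶠ[nhds (0:ℂ)] f := by
        filter_upwards [hΩ.mem_nhds h0] with w hw using Set.indicator_of_mem hw f
      simp only [taylorShift, if_pos rfl, Set.indicator_of_mem h0]
      exact hev.deriv_eq
    · simp only [taylorShift, if_neg hz0, Set.indicator_of_mem hz, Set.indicator_of_mem h0]
end

section
/- Godefroy–Shapiro criterion: Let X be a separable Banach space and T : X → X a bounded operator. If both span{x ∈ X : Tx = λx for some λ ∈ ℂ with |λ| < 1} and span{x ∈ X : Tx = λx for some λ ∈ ℂ with |λ| > 1} are dense in X, then T is topologically mixing, i.e., for all nonempty open sets U, V ⊆ X there is N such that T^n(U) ∩ V ≠ ∅ for all n ≥ N. -/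
/-!
Orbits of combinations of eigenvectors with `|λ| < 1` tend to `0`. A combination `y` of
eigenvectors with `|λ| > 1` has preimages `w n` under `T ^ n` tending to `0` (divide each
eigenvector by `λ ^ n`). For such `x ∈ U` and `y ∈ V`, the point `x + w n` lies in `U` for large
`n`, and `T ^ n` maps it to `T ^ n x + y`, which lies in `V` for large `n`.
-/

open Filter Topology

namespace ContinuousLinearMap

section Semiring

variable {R X : Type*} [Semiring R] [AddCommMonoid X] [TopologicalSpace X] [Module R X]

theorem pow_apply_of_apply_eq_smul (T : X →L[R] X) {x : X} {l : R} (h : T x = l • x) (n : ℕ) :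
    (T ^ n) x = l ^ n • x := by
  induction n with
  | zero => simp
  | succ n ih => rw [pow_succ, mul_apply_eq_comp, h, map_smul, ih, smul_smul, ← pow_succ']

theorem eventually_pow_image_inter_nonempty_of_dense [ContinuousAdd X] (T : X →L[R] X)
    {D₁ D₂ : Set X} (hD₁ : Dense D₁) (hD₂ : Dense D₂)
    (h₁ : ∀ x ∈ D₁, Tendsto (fun n : ℕ ↦ (T ^ n) x) atTop (𝓝 0))
    (h₂ : ∀ y ∈ D₂, ∃ w : ℕ → X, Tendsto w atTop (𝓝 0) ∧ ∀ n, (T ^ n) (w n) = y)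
    {U V : Set X} (hU : IsOpen U) (hV : IsOpen V) (hU₀ : U.Nonempty) (hV₀ : V.Nonempty) :
    ∀ᶠ n : ℕ in atTop, ((T ^ n) '' U ∩ V).Nonempty := by
  obtain ⟨x, hxD, hxU⟩ := hD₁.exists_mem_open hU hU₀
  obtain ⟨y, hyD, hyV⟩ := hD₂.exists_mem_open hV hV₀
  obtain ⟨w, hw, hTw⟩ := h₂ y hyD
  have hU_eventually : ∀ᶠ n in atTop, x + w n ∈ U := by
    have : Tendsto (fun n ↦ x + w n) atTop (𝓝 x) := by simpa using tendsto_const_nhds.add hw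
    exact this.eventually_mem (hU.mem_nhds hxU)
  have hV_eventually : ∀ᶠ n in atTop, (T ^ n) x + y ∈ V := by
    have : Tendsto (fun n ↦ (T ^ n) x + y) atTop (𝓝 y) := by
      simpa using (h₁ x hxD).add tendsto_const_nhds
    exact this.eventually_mem (hV.mem_nhds hyV)
  filter_upwards [hU_eventually, hV_eventually] with n hnU hnV
  exact ⟨(T ^ n) (x + w n), ⟨x + w n, hnU, rfl⟩, by rwa [map_add, hTw]⟩

end Semiring

section NormedField

variable {𝕜 X : Type*} [NormedField 𝕜] [AddCommMonoid X] [TopologicalSpace X]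
  [ContinuousAdd X] [Module 𝕜 X] [ContinuousSMul 𝕜 X]

theorem tendsto_pow_apply_of_mem_span_norm_lt_one (T : X →L[𝕜] X) {x : X}
    (hx : x ∈ Submodule.span 𝕜 {x : X | ∃ l : 𝕜, ‖l‖ < 1 ∧ T x = l • x}) :
    Tendsto (fun n ↦ (T ^ n) x) atTop (𝓝 0) := by
  induction hx using Submodule.span_induction with
  | mem x hx =>
    obtain ⟨l, hl, hTx⟩ := hx
    simpa only [T.pow_apply_of_apply_eq_smul hTx] using
      (tendsto_pow_atTop_nhds_zero_of_norm_lt_one hl).zero_smul_const x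
  | zero => simpa using tendsto_const_nhds
  | add x y _ _ hx hy => simpa using hx.add hy
  | smul a x _ hx => simpa using hx.const_smul a

theorem exists_tendsto_zero_pow_apply_eq_of_mem_span_one_lt_norm (T : X →L[𝕜] X) {y : X}
    (hy : y ∈ Submodule.span 𝕜 {x : X | ∃ l : 𝕜, 1 < ‖l‖ ∧ T x = l • x}) :
    ∃ w : ℕ → X, Tendsto w atTop (𝓝 0) ∧ ∀ n, (T ^ n) (w n) = y := by
  induction hy using Submodule.span_induction with
  | mem y hy =>
    obtain ⟨l, hl, hTy⟩ := hy
    have hl₀ : l ≠ 0 := norm_pos_iff.mp (one_pos.trans hl)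
    refine ⟨fun n ↦ l⁻¹ ^ n • y, ?_, fun n ↦ ?_⟩
    · have : ‖l⁻¹‖ < 1 := by rw [norm_inv]; exact inv_lt_one_of_one_lt₀ hl
      exact (tendsto_pow_atTop_nhds_zero_of_norm_lt_one this).zero_smul_const y
    · rw [map_smul, T.pow_apply_of_apply_eq_smul hTy, smul_smul, ← mul_pow,
        inv_mul_cancel₀ hl₀, one_pow, one_smul]
  | zero => exact ⟨0, tendsto_const_nhds, by simp⟩
  | add y z _ _ hy hz =>
    obtain ⟨u, hu, hTu⟩ := hy
    obtain ⟨v, hv, hTv⟩ := hz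
    exact ⟨fun n ↦ u n + v n, by simpa using hu.add hv, fun n ↦ by rw [map_add, hTu, hTv]⟩
  | smul a y _ hy =>
    obtain ⟨w, hw, hTw⟩ := hy
    exact ⟨fun n ↦ a • w n, by simpa using hw.const_smul a, fun n ↦ by rw [map_smul, hTw]⟩

end NormedField

end ContinuousLinearMap

open ContinuousLinearMap in
theorem stmt18_general (X : Type*) [NormedAddCommGroup X] [NormedSpace ℂ X] (T : X →L[ℂ] X)
    (h1 : Dense ((Submodule.span ℂ {x : X | ∃ l : ℂ, ‖l‖ < 1 ∧ T x = l • x} : Submodule ℂ X) : Set X))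
    (h2 : Dense ((Submodule.span ℂ {x : X | ∃ l : ℂ, 1 < ‖l‖ ∧ T x = l • x} : Submodule ℂ X) : Set X)) :
    ∀ U V : Set X, IsOpen U → IsOpen V → U.Nonempty → V.Nonempty →
      ∃ N : ℕ, ∀ n : ℕ, N ≤ n → ((T ^ n) '' U ∩ V).Nonempty := fun _ _ hU hV hU₀ hV₀ ↦
  eventually_atTop.mp <| T.eventually_pow_image_inter_nonempty_of_dense h1 h2
    (fun _ ↦ T.tendsto_pow_apply_of_mem_span_norm_lt_one)
    (fun _ ↦ T.exists_tendsto_zero_pow_apply_eq_of_mem_span_one_lt_norm) hU hV hU₀ hV₀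

theorem stmt18 (X : Type*) [NormedAddCommGroup X] [NormedSpace ℂ X] [CompleteSpace X]
    [TopologicalSpace.SeparableSpace X] (T : X →L[ℂ] X)
    (h1 : Dense ((Submodule.span ℂ {x : X | ∃ l : ℂ, ‖l‖ < 1 ∧ T x = l • x} : Submodule ℂ X) : Set X))
    (h2 : Dense ((Submodule.span ℂ {x : X | ∃ l : ℂ, 1 < ‖l‖ ∧ T x = l • x} : Submodule ℂ X) : Set X)) :
    ∀ U V : Set X, IsOpen U → IsOpen V → U.Nonempty → V.Nonempty →
      ∃ N : ℕ, ∀ n : ℕ, N ≤ n → ((T ^ n) '' U ∩ V).Nonempty :=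
  stmt18_general X T h1 h2
end

section
/- Let Ω ⊆ 𝔻 be open with 0 ∈ Ω, let λ ∈ 𝕋, and let γ_λ(z) = 1/(1 - λz). Suppose m({z ∈ Ω : |z - 1/λ| < t}) = O(t^{2+ε}) as t → 0 for some ε > 0. Then ∫_Ω |1 - λz|^{-2} dm(z) < ∞, i.e. γ_λ ∈ A^2(Ω), so λ is a unimodular eigenvalue of the Taylor shift on A^2(Ω). -/
open MeasureTheory

theorem stmt19 (Ω : Set ℂ) (hΩ : IsOpen Ω) (hsub : Ω ⊆ Metric.ball (0:ℂ) 1)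
    (h0 : (0:ℂ) ∈ Ω) (l : ℂ) (hl : ‖l‖ = 1)
    (ε C t₀ : ℝ) (hε : 0 < ε) (ht₀ : 0 < t₀)
    (harea : ∀ t ∈ Set.Ioo (0:ℝ) t₀,
      (volume {z ∈ Ω | ‖z - l⁻¹‖ < t}).toReal ≤ C * t ^ ((2:ℝ) + ε)) :
    IntegrableOn (fun z : ℂ => ‖(1 - l * z)⁻¹‖ ^ 2) Ω volume ∧
    ∀ z ∈ Ω, taylorShift (fun w => (1 - l * w)⁻¹) z = l * (1 - l * z)⁻¹ := by
  have hl0 : l ≠ 0 := by intro h; rw [h] at hl; simp at hl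
  have hla : l * l⁻¹ = 1 := mul_inv_cancel₀ hl0
  have ha1 : ‖(l⁻¹ : ℂ)‖ = 1 := by rw [norm_inv, hl]; norm_num
  have hnorm : ∀ z : ℂ, ‖(1 - l * z)⁻¹‖ = ‖z - l⁻¹‖⁻¹ := by
    intro z
    have h1 : 1 - l * z = -(l * (z - l⁻¹)) := by linear_combination -hla
    rw [h1, norm_inv, norm_neg, norm_mul, hl, one_mul]
  constructor
  · -- integrability
    set δ : ℝ := min t₀ 1 / 2 with hδdef
    have hδ : 0 < δ := by positivity
    have hδt₀ : δ < t₀ := by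
      have : min t₀ 1 ≤ t₀ := min_le_left _ _
      simp only [hδdef]; linarith
    have hC : 0 ≤ C := by
      have h1 := harea δ ⟨hδ, hδt₀⟩
      have h2 : 0 < δ ^ ((2:ℝ) + ε) := Real.rpow_pos_of_pos hδ _
      nlinarith [ENNReal.toReal_nonneg (a := volume {z ∈ Ω | ‖z - l⁻¹‖ < δ})]
    -- the dyadic annuli
    set B : ℕ → Set ℂ := fun k =>
      {z ∈ Ω | δ * (1/2)^(k+1) ≤ ‖z - l⁻¹‖ ∧ ‖z - l⁻¹‖ < δ * (1/2)^k} with hB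
    have hcover : Ω ⊆ (Ω \ Metric.ball l⁻¹ δ) ∪ ⋃ k, B k := by
      intro z hz
      by_cases hzb : z ∈ Metric.ball l⁻¹ δ
      · right
        have hzr : ‖z - l⁻¹‖ < δ := by
          simpa [dist_eq_norm] using hzb
        have hz0 : 0 < ‖z - l⁻¹‖ := by
          rw [norm_pos_iff, sub_ne_zero]
          intro h
          have := hsub hz
          rw [Metric.mem_ball, dist_zero_right, h, ha1] at this
          exact lt_irrefl _ this
        have hex : ∃ n : ℕ, δ * (1/2)^(n+1) ≤ ‖z - l⁻¹‖ := by
          obtain ⟨n, hn⟩ := exists_pow_lt_of_lt_one (x := ‖z - l⁻¹‖ / δ)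
            (by positivity) (by norm_num : (1/2:ℝ) < 1)
          refine ⟨n, ?_⟩
          have h1 : ((1:ℝ)/2)^(n+1) ≤ (1/2)^n := by
            apply pow_le_pow_of_le_one <;> norm_num
          have h2 : δ * (1/2)^n < ‖z - l⁻¹‖ := by
            rw [lt_div_iff₀ hδ] at hn; linarith [hn]
          nlinarith [hδ.le]
        refine Set.mem_iUnion.2 ⟨Nat.find hex, hz, Nat.find_spec hex, ?_⟩
        rcases Nat.eq_zero_or_pos (Nat.find hex) with h | h
        · rw [h]; simpa using hzr
        · obtain ⟨m, hm⟩ := Nat.exists_eq_succ_of_ne_zero h.ne'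
          have := Nat.find_min hex (m := m) (by omega)
          rw [hm]
          push_neg at this
          simpa using this
      · left; exact ⟨hz, hzb⟩
    -- measurability
    have hmeas : Measurable fun z : ℂ => ‖(1 - l * z)⁻¹‖ ^ 2 :=
      (((measurable_const.sub (measurable_const.mul measurable_id)).inv).norm).pow_const 2
    refine ⟨hmeas.aestronglyMeasurable, ?_⟩
    rw [hasFiniteIntegral_iff_norm]
    have hps : ∀ z : ℂ, ENNReal.ofReal ‖‖(1 - l * z)⁻¹‖ ^ 2‖
        = ENNReal.ofReal (‖z - l⁻¹‖⁻¹ ^ 2) := by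
      intro z
      rw [Real.norm_of_nonneg (by positivity), hnorm]
    simp only [hps]
    set g : ℂ → ENNReal := fun z => ENNReal.ofReal (‖z - l⁻¹‖⁻¹ ^ 2) with hg
    -- far part bound
    have hfar : ∫⁻ z in Ω \ Metric.ball l⁻¹ δ, g z ∂volume
        ≤ ENNReal.ofReal (δ⁻¹ ^ 2) * volume (Metric.ball (0:ℂ) 1) := by
      calc ∫⁻ z in Ω \ Metric.ball l⁻¹ δ, g z ∂volume
          ≤ ∫⁻ _ in Ω \ Metric.ball l⁻¹ δ, ENNReal.ofReal (δ⁻¹ ^ 2) ∂volume := by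
            apply setLIntegral_mono measurable_const
            intro z hz
            apply ENNReal.ofReal_le_ofReal
            have h1 : δ ≤ ‖z - l⁻¹‖ := by
              have := hz.2
              rw [Metric.mem_ball, dist_eq_norm, not_lt] at this
              exact this
            have h2 : ‖z - l⁻¹‖⁻¹ ≤ δ⁻¹ := by
              apply inv_anti₀ hδ h1
            have h3 : (0:ℝ) ≤ ‖z - l⁻¹‖⁻¹ := by positivity
            nlinarith
        _ = ENNReal.ofReal (δ⁻¹ ^ 2) * volume (Ω \ Metric.ball l⁻¹ δ) :=
            setLIntegral_const _ _
        _ ≤ ENNReal.ofReal (δ⁻¹ ^ 2) * volume (Metric.ball (0:ℂ) 1) := by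
            apply mul_le_mul_right
            apply measure_mono
            exact fun z hz => hsub hz.1
    -- near part bound
    have hnear : ∀ k : ℕ, ∫⁻ z in B k, g z ∂volume
        ≤ ENNReal.ofReal ((4*C*δ^ε) * ((1/2:ℝ)^ε)^k) := by
      intro k
      have htk : (0:ℝ) < δ * (1/2)^k := by positivity
      have htk1 : (0:ℝ) < δ * (1/2)^(k+1) := by positivity
      have hmeasB : volume (B k) ≤ ENNReal.ofReal (C * (δ * (1/2)^k) ^ ((2:ℝ)+ε)) := by
        have hsubB : B k ⊆ {z ∈ Ω | ‖z - l⁻¹‖ < δ * (1/2)^k} :=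
          fun z hz => ⟨hz.1, hz.2.2⟩
        have hfin : volume {z ∈ Ω | ‖z - l⁻¹‖ < δ * (1/2)^k} ≠ ⊤ := by
          apply ne_top_of_le_ne_top
            (measure_ball_lt_top (μ := volume) (x := l⁻¹) (r := δ * (1/2)^k)).ne
          apply measure_mono
          intro z hz
          rw [Metric.mem_ball, dist_eq_norm]
          exact hz.2
        have htIoo : δ * (1/2)^k ∈ Set.Ioo (0:ℝ) t₀ := by
          constructor
          · exact htk
          · have h1 : ((1:ℝ)/2)^k ≤ 1 := by
              apply pow_le_one₀ <;> norm_num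
            nlinarith
        have := harea _ htIoo
        calc volume (B k) ≤ volume {z ∈ Ω | ‖z - l⁻¹‖ < δ * (1/2)^k} :=
              measure_mono hsubB
          _ ≤ ENNReal.ofReal (C * (δ * (1/2)^k) ^ ((2:ℝ)+ε)) := by
              rw [ENNReal.le_ofReal_iff_toReal_le hfin
                (le_trans ENNReal.toReal_nonneg this)]
              exact this
      calc ∫⁻ z in B k, g z ∂volume
          ≤ ∫⁻ _ in B k, ENNReal.ofReal ((δ * (1/2)^(k+1))⁻¹ ^ 2) ∂volume := by
            apply setLIntegral_mono measurable_const
            intro z hz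
            apply ENNReal.ofReal_le_ofReal
            have h1 : δ * (1/2)^(k+1) ≤ ‖z - l⁻¹‖ := hz.2.1
            have h2 : ‖z - l⁻¹‖⁻¹ ≤ (δ * (1/2)^(k+1))⁻¹ := inv_anti₀ htk1 h1
            have h3 : (0:ℝ) ≤ ‖z - l⁻¹‖⁻¹ := by positivity
            nlinarith
        _ = ENNReal.ofReal ((δ * (1/2)^(k+1))⁻¹ ^ 2) * volume (B k) :=
            setLIntegral_const _ _
        _ ≤ ENNReal.ofReal ((δ * (1/2)^(k+1))⁻¹ ^ 2)
              * ENNReal.ofReal (C * (δ * (1/2)^k) ^ ((2:ℝ)+ε)) :=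
            mul_le_mul_right hmeasB _
        _ = ENNReal.ofReal ((δ * (1/2)^(k+1))⁻¹ ^ 2 * (C * (δ * (1/2)^k) ^ ((2:ℝ)+ε))) := by
            rw [← ENNReal.ofReal_mul (by positivity)]
        _ = ENNReal.ofReal ((4*C*δ^ε) * ((1/2:ℝ)^ε)^k) := by
            congr 1
            rw [Real.rpow_add htk, Real.rpow_two,
              Real.mul_rpow hδ.le (by positivity : (0:ℝ) ≤ (1/2:ℝ)^k),
              show ((1/2:ℝ)^k) ^ ε = ((1/2:ℝ)^ε)^k by
                rw [← Real.rpow_natCast (1/2:ℝ) k, ← Real.rpow_mul (by norm_num),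
                  mul_comm, Real.rpow_mul (by norm_num), Real.rpow_natCast]]
            have hq : (0:ℝ) < ((1/2:ℝ)^ε) := Real.rpow_pos_of_pos (by norm_num) _
            field_simp
            ring
    -- geometric series
    have hq1 : ((1/2:ℝ)^ε) < 1 := Real.rpow_lt_one (by norm_num) (by norm_num) hε
    have hq0 : (0:ℝ) ≤ ((1/2:ℝ)^ε) := (Real.rpow_pos_of_pos (by norm_num) _).le
    have hsum : ∑' k : ℕ, ENNReal.ofReal ((4*C*δ^ε) * ((1/2:ℝ)^ε)^k) < ⊤ := by
      have heq : ∀ k : ℕ, ENNReal.ofReal ((4*C*δ^ε) * ((1/2:ℝ)^ε)^k)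
          = ENNReal.ofReal (4*C*δ^ε) * (ENNReal.ofReal ((1/2:ℝ)^ε))^k := by
        intro k
        rw [ENNReal.ofReal_mul (by positivity), ENNReal.ofReal_pow hq0]
      simp only [heq]
      rw [ENNReal.tsum_mul_left, ENNReal.tsum_geometric]
      apply ENNReal.mul_lt_top ENNReal.ofReal_lt_top
      rw [ENNReal.inv_lt_top]
      rw [tsub_pos_iff_lt]
      exact ENNReal.ofReal_lt_one.2 hq1
    calc ∫⁻ z in Ω, g z ∂volume
        ≤ ∫⁻ z in (Ω \ Metric.ball l⁻¹ δ) ∪ ⋃ k, B k, g z ∂volume :=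
          lintegral_mono_set hcover
      _ ≤ (∫⁻ z in Ω \ Metric.ball l⁻¹ δ, g z ∂volume)
            + ∫⁻ z in ⋃ k, B k, g z ∂volume := lintegral_union_le _ _ _
      _ ≤ (ENNReal.ofReal (δ⁻¹ ^ 2) * volume (Metric.ball (0:ℂ) 1))
            + ∑' k : ℕ, ENNReal.ofReal ((4*C*δ^ε) * ((1/2:ℝ)^ε)^k) := by
          apply add_le_add hfar
          exact le_trans (lintegral_iUnion_le _ _) (ENNReal.tsum_le_tsum hnear)
      _ < ⊤ := by
          apply ENNReal.add_lt_top.2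
          exact ⟨ENNReal.mul_lt_top ENNReal.ofReal_lt_top measure_ball_lt_top, hsum⟩
  · -- eigenvalue equation
    intro z hz
    have hz1 : ‖z‖ < 1 := by simpa [dist_zero_right] using hsub hz
    have hlz : 1 - l * z ≠ 0 := by
      intro h
      have h1 : l * z = 1 := by linear_combination -h
      have : ‖l * z‖ = 1 := by rw [h1, norm_one]
      rw [norm_mul, hl, one_mul] at this
      linarith
    by_cases hz0 : z = 0
    · subst hz0
      have hd : HasDerivAt (fun w : ℂ => (1 - l * w)⁻¹) l 0 := by
        have h1 : HasDerivAt (fun w : ℂ => 1 - l * w) (-l) 0 := by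
          simpa using ((hasDerivAt_id (0:ℂ)).const_mul l).const_sub 1
        have h2 := h1.inv (by simp)
        simp at h2; exact h2
      simp only [taylorShift, if_pos rfl, hd.deriv]
      simp
    · simp only [taylorShift, if_neg hz0]
      rw [mul_zero, sub_zero, inv_one]
      field_simp
      ring
end
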